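/- Under Assumption A, let k ∈ ℕ, λ > 0, ρ ∈ (0,1), M > 0, and x_k ∈ ℝ^d, and suppose ρ_λ := (10λ²L^{d/2}/l^{d/2+2}) exp(λ²M/(2l)) < 1 and ‖x_k − x*‖₂² ≤ ρ^k M. Then V[ψ_k]/(E[ψ_k])² ≤ (ρ_λ l²/(10λ²)) · ((L+λ)^d / (2^{d/2} λ^{d/2} L^{d/2})) · exp(λM/2). -/

import Mathlib

/-!
Both moments of `ψ_k` are Gaussian integrals of `exp (-β f)` with `β = ρ⁻ᵏ`. Sandwiching `f`
between the quadratics `f* + l/2 ‖x - x*‖²` and `f* + L/2 ‖x - x*‖²` and completing the square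
against the Gaussian weight bounds `E[ψ_k]` from below and `E[ψ_k²]` from above by explicit
Gaussian integrals. In their ratio the factors `exp (-β f*)` cancel, and what remains is
`exp (β ‖x_k - x*‖² (Lλ/(L+λ) - lλ/(2l+λ))) ((L+λ)² / ((2l+λ)λ))^{d/2}`, which
`β ‖x_k - x*‖² ≤ M` turns into the stated bound.
-/

open MeasureTheory Real

noncomputable section

lemma exp_mul_rpow_div_sq (x y : ℝ) {q r : ℝ} (hq : 0 ≤ q) (hr : 0 < r) (s : ℝ) :
    rexp x * q ^ s / (rexp y * r ^ s) ^ 2 = rexp (x - 2 * y) * (q / r ^ 2) ^ s := by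
  rw [div_rpow hq (by positivity), ← rpow_pow_comm hr.le, exp_sub, mul_pow, ← exp_nat_mul]
  push_cast
  field_simp

lemma mul_div_add_sub_mul_div_two_mul_add_le {l L lam : ℝ} (hl : 0 < l) (hL : 0 ≤ L)
    (hlam : 0 < lam) :
    L * lam / (L + lam) - l * lam / (2 * l + lam) ≤ lam / 2 + lam ^ 2 / (2 * l) := by
  rw [div_sub_div _ _ (by positivity) (by positivity), div_add_div _ _ two_ne_zero (by positivity),
    div_le_div_iff₀ (by positivity) (by positivity)]
  nlinarith [mul_pos hl hlam, mul_nonneg hL hlam.le, mul_pos (mul_pos hlam hlam) hlam]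

section GaussianMean

variable {V : Type*} [NormedAddCommGroup V] [InnerProductSpace ℝ V]

lemma mul_norm_sub_sq_add_mul_norm_sub_sq {a b : ℝ} (hab : a + b ≠ 0) (x u v : V) :
    a * ‖x - u‖ ^ 2 + b * ‖x - v‖ ^ 2 =
      (a + b) * ‖x - ((a / (a + b)) • u + (b / (a + b)) • v)‖ ^ 2 +
        a * b / (a + b) * ‖u - v‖ ^ 2 := by
  simp only [← real_inner_self_eq_norm_sq, inner_sub_left, inner_sub_right, inner_add_left,
    inner_add_right, real_inner_smul_left, real_inner_smul_right, real_inner_comm u x,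
    real_inner_comm v x, real_inner_comm v u]
  field_simp
  ring

lemma exp_neg_quadratic_mul_exp_neg_quadratic {a p : ℝ} (hap : a + p ≠ 0) (c : ℝ) (x u v : V) :
    rexp (-(c + a / 2 * ‖x - u‖ ^ 2)) * rexp (-(p * ‖x - v‖ ^ 2 / 2)) =
      rexp (-(c + a * p / (a + p) * ‖v - u‖ ^ 2 / 2)) *
        rexp (-((a + p) * ‖x - ((a / (a + p)) • u + (p / (a + p)) • v)‖ ^ 2 / 2)) := by
  rw [← exp_add, ← exp_add, norm_sub_rev v u]
  congr 1
  linear_combination (-1 / 2 : ℝ) * mul_norm_sub_sq_add_mul_norm_sub_sq hap x u v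

variable [FiniteDimensional ℝ V] [MeasurableSpace V] [BorelSpace V]

lemma integral_exp_neg_mul_norm_sub_sq_div_two {p : ℝ} (hp : 0 < p) (v : V) :
    ∫ x : V, rexp (-(p * ‖x - v‖ ^ 2 / 2)) = (2 * π / p) ^ (Module.finrank ℝ V / 2 : ℝ) := by
  rw [integral_sub_right_eq_self (fun x : V => rexp (-(p * ‖x‖ ^ 2 / 2))) v]
  calc ∫ x : V, rexp (-(p * ‖x‖ ^ 2 / 2)) = ∫ x : V, rexp (-(p / 2) * ‖x‖ ^ 2) := by
        congr 1 with x; ring_nf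
    _ = _ := by rw [GaussianFourier.integral_rexp_neg_mul_sq_norm (half_pos hp), div_div_eq_mul_div,
        mul_comm]

lemma integrable_exp_neg_mul_norm_sub_sq_div_two {p : ℝ} (hp : 0 < p) (v : V) :
    Integrable fun x : V => rexp (-(p * ‖x - v‖ ^ 2 / 2)) :=
  .of_integral_ne_zero <| by rw [integral_exp_neg_mul_norm_sub_sq_div_two hp]; positivity

/-- The expectation of `φ` under `N(v, p⁻¹ I)`. -/
def gaussianMean (p : ℝ) (v : V) (φ : V → ℝ) : ℝ :=
  (p / (2 * π)) ^ (Module.finrank ℝ V / 2 : ℝ) * ∫ x, φ x * rexp (-(p * ‖x - v‖ ^ 2 / 2))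

variable {p a c : ℝ} {u v : V}

lemma gaussianMean_exp_neg_quadratic (hp : 0 < p) (hap : 0 < a + p) :
    gaussianMean p v (fun x => rexp (-(c + a / 2 * ‖x - u‖ ^ 2))) =
      rexp (-(c + a * p / (a + p) * ‖v - u‖ ^ 2 / 2)) *
        (p / (a + p)) ^ (Module.finrank ℝ V / 2 : ℝ) := by
  simp only [gaussianMean, exp_neg_quadratic_mul_exp_neg_quadratic hap.ne']
  rw [integral_const_mul, integral_exp_neg_mul_norm_sub_sq_div_two hap, mul_left_comm,
    ← mul_rpow (by positivity) (by positivity)]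
  congr 2
  field_simp

lemma integrable_exp_neg_mul_gaussian {g : V → ℝ} (hg : Measurable g) (hgc : ∀ x, c ≤ g x)
    (hp : 0 < p) : Integrable fun x => rexp (-g x) * rexp (-(p * ‖x - v‖ ^ 2 / 2)) :=
  (integrable_exp_neg_mul_norm_sub_sq_div_two hp v).bdd_mul (c := rexp (-c))
    hg.neg.exp.aestronglyMeasurable
    (ae_of_all _ fun x => by rw [norm_of_nonneg (exp_pos _).le]; gcongr; exact hgc x)

lemma le_gaussianMean_exp_neg_of_le_quadratic {g : V → ℝ} (hp : 0 < p) (hap : 0 < a + p)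
    (hint : Integrable fun x => rexp (-g x) * rexp (-(p * ‖x - v‖ ^ 2 / 2)))
    (hg : ∀ x, g x ≤ c + a / 2 * ‖x - u‖ ^ 2) :
    rexp (-(c + a * p / (a + p) * ‖v - u‖ ^ 2 / 2)) *
        (p / (a + p)) ^ (Module.finrank ℝ V / 2 : ℝ) ≤
      gaussianMean p v (fun x => rexp (-g x)) := by
  rw [← gaussianMean_exp_neg_quadratic hp hap]
  refine mul_le_mul_of_nonneg_left (integral_mono_of_nonneg (ae_of_all _ fun x => by positivity)
    hint (ae_of_all _ fun x => ?_)) (by positivity)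
  dsimp only
  gcongr
  exact hg x

lemma gaussianMean_exp_neg_le_of_quadratic_le {g : V → ℝ} (hp : 0 < p) (hap : 0 < a + p)
    (hg : ∀ x, c + a / 2 * ‖x - u‖ ^ 2 ≤ g x) :
    gaussianMean p v (fun x => rexp (-g x)) ≤
      rexp (-(c + a * p / (a + p) * ‖v - u‖ ^ 2 / 2)) *
        (p / (a + p)) ^ (Module.finrank ℝ V / 2 : ℝ) := by
  rw [← gaussianMean_exp_neg_quadratic hp hap]
  have hint : Integrable fun x => rexp (-(c + a / 2 * ‖x - u‖ ^ 2)) *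
      rexp (-(p * ‖x - v‖ ^ 2 / 2)) := by
    simp only [exp_neg_quadratic_mul_exp_neg_quadratic hap.ne']
    exact (integrable_exp_neg_mul_norm_sub_sq_div_two hap _).const_mul _
  refine mul_le_mul_of_nonneg_left (integral_mono_of_nonneg (ae_of_all _ fun x => by positivity)
    hint (ae_of_all _ fun x => ?_)) (by positivity)
  dsimp only
  gcongr
  exact hg x

lemma gaussianMean_exp_neg_two_mul_div_sq_le {g : V → ℝ} {b : ℝ} (hg : Measurable g)
    (hp : 0 < p) (ha : 0 ≤ a) (hbp : 0 < b + p) (hlow : ∀ x, c + a / 2 * ‖x - u‖ ^ 2 ≤ g x)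
    (hup : ∀ x, g x ≤ c + b / 2 * ‖x - u‖ ^ 2) :
    gaussianMean p v (fun x => rexp (-(2 * g x))) / gaussianMean p v (fun x => rexp (-g x)) ^ 2 ≤
      rexp ((b * p / (b + p) - a * p / (2 * a + p)) * ‖v - u‖ ^ 2) *
        ((b + p) ^ 2 / ((2 * a + p) * p)) ^ (Module.finrank ℝ V / 2 : ℝ) := by
  have hE := le_gaussianMean_exp_neg_of_le_quadratic (v := v) hp hbp
    (integrable_exp_neg_mul_gaussian hg
      (fun x => (le_add_of_nonneg_right (by positivity)).trans (hlow x)) hp) hup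
  have hV := gaussianMean_exp_neg_le_of_quadratic_le (c := 2 * c) (a := 2 * a) (u := u) (v := v)
    (g := fun x => 2 * g x) hp (by positivity) (fun x => by linarith [hlow x])
  calc _ ≤ _ := div_le_div₀ (by positivity) hV (by positivity)
        (pow_le_pow_left₀ (by positivity) hE 2)
    _ = _ := by
      rw [exp_mul_rpow_div_sq _ _ (by positivity) (by positivity)]
      congr 2
      · ring
      · field_simp

end GaussianMean

theorem Vpsi_over_Epsi_sq_bound_general
    (d : ℕ)
    (f : EuclideanSpace ℝ (Fin d) → ℝ) (hf : Measurable f)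
    (xs : EuclideanSpace ℝ (Fin d)) (l L : ℝ) (hl : 0 < l) (hlL : l ≤ L)
    (hlow : ∀ x, f xs + l / 2 * ‖x - xs‖ ^ 2 ≤ f x)
    (hup : ∀ x, f x ≤ f xs + L / 2 * ‖x - xs‖ ^ 2)
    (k : ℕ) (lam ρ M : ℝ) (hlam : 0 < lam) (hρ0 : 0 < ρ)
    (xk : EuclideanSpace ℝ (Fin d))
    (rl : ℝ)
    (hrl : rl = 10 * lam ^ 2 * L ^ ((d : ℝ) / 2) / l ^ ((d : ℝ) / 2 + 2) *
      Real.exp (lam ^ 2 * M / (2 * l)))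
    (hxk : ‖xk - xs‖ ^ 2 ≤ ρ ^ k * M)
    (Eψ Vψ : ℝ)
    (hEψ : Eψ = ((ρ ^ k)⁻¹ * lam / (2 * π)) ^ ((d : ℝ) / 2) *
      ∫ x : EuclideanSpace ℝ (Fin d),
        Real.exp (-((ρ ^ k)⁻¹ * f x)) *
          Real.exp (-((ρ ^ k)⁻¹ * lam * ‖x - xk‖ ^ 2 / 2)))
    (hVψ : Vψ = ((ρ ^ k)⁻¹ * lam / (2 * π)) ^ ((d : ℝ) / 2) *
      (∫ x : EuclideanSpace ℝ (Fin d),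
        (Real.exp (-((ρ ^ k)⁻¹ * f x))) ^ 2 *
          Real.exp (-((ρ ^ k)⁻¹ * lam * ‖x - xk‖ ^ 2 / 2))) - Eψ ^ 2) :
    Vψ / Eψ ^ 2 ≤ rl * l ^ 2 / (10 * lam ^ 2) *
        ((L + lam) ^ (d : ℝ) /
          ((2 : ℝ) ^ ((d : ℝ) / 2) * lam ^ ((d : ℝ) / 2) * L ^ ((d : ℝ) / 2))) *
        Real.exp (lam * M / 2) := by
  have hL : 0 < L := hl.trans_le hlL
  set β := (ρ ^ k)⁻¹ with hβ_def
  have hβ : 0 < β := by positivity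
  have hβt : β * ‖xk - xs‖ ^ 2 ≤ M := by rwa [hβ_def, inv_mul_le_iff₀ (by positivity)]
  have hE : Eψ = gaussianMean (β * lam) xk (fun x => rexp (-(β * f x))) := by
    rw [hEψ, gaussianMean, finrank_euclideanSpace_fin]
  have hV : Vψ ≤ gaussianMean (β * lam) xk (fun x => rexp (-(2 * (β * f x)))) := by
    rw [hVψ, gaussianMean, finrank_euclideanSpace_fin]
    simp only [← exp_nat_mul, Nat.cast_ofNat, mul_neg]
    exact sub_le_self _ (sq_nonneg Eψ)
  have hratio := gaussianMean_exp_neg_two_mul_div_sq_le (c := β * f xs) (a := β * l) (b := β * L)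
    (u := xs) (v := xk) (p := β * lam) (hf.const_mul β) (by positivity) (by positivity)
    (by positivity) (fun x => by nlinarith [hlow x]) (fun x => by nlinarith [hup x])
  rw [finrank_euclideanSpace_fin, ← hE] at hratio
  calc Vψ / Eψ ^ 2 ≤ _ := (div_le_div_of_nonneg_right hV (sq_nonneg _)).trans hratio
    _ = rexp (β * ‖xk - xs‖ ^ 2 * (L * lam / (L + lam) - l * lam / (2 * l + lam))) *
        ((L + lam) ^ 2 / ((2 * l + lam) * lam)) ^ ((d : ℝ) / 2) := by
      congr 2 <;> field_simp
    _ ≤ rexp (M * (lam / 2 + lam ^ 2 / (2 * l))) *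
        ((L + lam) ^ 2 / (2 * l * lam)) ^ ((d : ℝ) / 2) := by
      gcongr rexp ?_ * ?_ ^ _
      · calc _ ≤ β * ‖xk - xs‖ ^ 2 * (lam / 2 + lam ^ 2 / (2 * l)) := by
              gcongr
              exact mul_div_add_sub_mul_div_two_mul_add_le hl hL.le hlam
          _ ≤ _ := by gcongr
      · gcongr
        linarith
    _ = _ := by
      have hsq : (L + lam) ^ (d : ℝ) = ((L + lam) ^ 2) ^ ((d : ℝ) / 2) := by
        rw [← rpow_natCast_mul (by positivity)]
        ring_nf
      rw [hrl, hsq, rpow_add hl, rpow_two, div_rpow (by positivity) (by positivity),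
        mul_rpow (by positivity) hlam.le, mul_rpow zero_le_two hl.le,
        show M * (lam / 2 + lam ^ 2 / (2 * l)) = lam ^ 2 * M / (2 * l) + lam * M / 2 by ring,
        exp_add]
      field_simp

/-- Lemma 3.4, first bound: `V[ψ_k]/(E[ψ_k])²` is bounded. -/
theorem Vpsi_over_Epsi_sq_bound
    (d : ℕ) (hd : 1 ≤ d)
    (f : EuclideanSpace ℝ (Fin d) → ℝ) (hf : Measurable f)
    (xs : EuclideanSpace ℝ (Fin d)) (l L : ℝ) (hl : 0 < l) (hlL : l ≤ L)
    (hlow : ∀ x, f xs + l / 2 * ‖x - xs‖ ^ 2 ≤ f x)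
    (hup : ∀ x, f x ≤ f xs + L / 2 * ‖x - xs‖ ^ 2)
    (k : ℕ) (lam ρ M : ℝ) (hlam : 0 < lam) (hρ0 : 0 < ρ) (hρ1 : ρ < 1) (hM : 0 < M)
    (xk : EuclideanSpace ℝ (Fin d))
    (rl : ℝ)
    (hrl : rl = 10 * lam ^ 2 * L ^ ((d : ℝ) / 2) / l ^ ((d : ℝ) / 2 + 2) *
      Real.exp (lam ^ 2 * M / (2 * l)))
    (hrl1 : rl < 1)
    (hxk : ‖xk - xs‖ ^ 2 ≤ ρ ^ k * M)
    (Eψ Vψ : ℝ)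
    (hEψ : Eψ = ((ρ ^ k)⁻¹ * lam / (2 * π)) ^ ((d : ℝ) / 2) *
      ∫ x : EuclideanSpace ℝ (Fin d),
        Real.exp (-((ρ ^ k)⁻¹ * f x)) *
          Real.exp (-((ρ ^ k)⁻¹ * lam * ‖x - xk‖ ^ 2 / 2)))
    (hVψ : Vψ = ((ρ ^ k)⁻¹ * lam / (2 * π)) ^ ((d : ℝ) / 2) *
      (∫ x : EuclideanSpace ℝ (Fin d),
        (Real.exp (-((ρ ^ k)⁻¹ * f x))) ^ 2 *
          Real.exp (-((ρ ^ k)⁻¹ * lam * ‖x - xk‖ ^ 2 / 2))) - Eψ ^ 2) :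
    Vψ / Eψ ^ 2 ≤ rl * l ^ 2 / (10 * lam ^ 2) *
        ((L + lam) ^ (d : ℝ) /
          ((2 : ℝ) ^ ((d : ℝ) / 2) * lam ^ ((d : ℝ) / 2) * L ^ ((d : ℝ) / 2))) *
        Real.exp (lam * M / 2) :=
  Vpsi_over_Epsi_sq_bound_general d f hf xs l L hl hlL hlow hup k lam ρ M hlam hρ0 xk rl hrl hxk Eψ
    Vψ hEψ hVψ
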